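/- Let φ:(0,∞)→(0,∞) be non-decreasing, positive, continuous with ∫₀¹ s/φ(s) ds < ∞ and δ_φ < 2. If u_φ ∈ DC_N for some N ∈ (-∞,0) ∪ (1,∞], then δ_φ ≤ (N+1)/N (where (N+1)/N := 1 for N = ∞). -/

import Mathlib

open Set MeasureTheory Filter

noncomputable def lnphi (φ : ℝ → ℝ) (t : ℝ) : ℝ := ∫ s in (1:ℝ)..t, 1 / φ s

noncomputable def uphi (φ : ℝ → ℝ) (r : ℝ) : ℝ := ∫ t in (0:ℝ)..r, lnphi φ t

noncomputable def philimsup (φ : ℝ → ℝ) (s : ℝ) : ℝ :=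
  Filter.limsup (fun t => (φ (s + t) - φ s) / t) (nhdsWithin 0 (Set.Ioi 0))

def thetaSet (φ : ℝ → ℝ) : Set ℝ :=
  {x | ∃ s : ℝ, 0 < s ∧ x = s / φ s * philimsup φ s}

noncomputable def psiN (N : ℝ) (u : ℝ → ℝ) (r : ℝ) : ℝ := r ^ N * u (r ^ (-N))

noncomputable def psiInf (u : ℝ → ℝ) (r : ℝ) : ℝ := Real.exp r * u (Real.exp (-r))

/-- Membership in `DC_N`, parametrized by `m = (N-1)/N` (so `N = 1/(1-m)`,
`m = 1` corresponding to `N = ∞`); `N ∈ (-∞,0) ∪ (1,∞]` corresponds to `m > 0`. -/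
def memDC (m : ℝ) (u : ℝ → ℝ) : Prop :=
  ContinuousOn u (Set.Ici 0) ∧ ConvexOn ℝ (Set.Ici 0) u ∧ u 0 = 0 ∧
    (if m = 1 then ConvexOn ℝ Set.univ (psiInf u)
      else ConvexOn ℝ (Set.Ioi 0) (psiN (1 / (1 - m)) u))

/-!
Write the `DC_N` transform as `r ↦ k(r) · u(1/k(r))`, with `k = exp` for `N = ∞` and
`k(r) = r^N` otherwise. At the point where `k = 1` its second derivative is
`u''(1) k'² + u(1) k''`, because `u_φ'(1) = 0`; since `u_φ'' = 1/φ`, convexity gives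
`m · u_φ(1) + 1/φ(1) ≥ 0`.

If `δ_φ > 2 - m`, pick `e ∈ (2 - m, δ_φ)` with `e ≠ 1`. Then `D⁺φ(x) > e φ(x)/x`, so
`φ(x)/x^e` is non-decreasing and `φ(s) ≤ φ(1) s^e` on `(0, 1]`, whence
`-u_φ(1) = ∫₀¹ ∫ₜ¹ 1/φ ≥ 1/((2 - e) φ(1))`. Combined with the first inequality this gives
`m ≤ 2 - e`, a contradiction.
-/

open Topology

theorem ConvexOn.nonneg_of_hasDerivAt_of_hasDerivAt {S : Set ℝ} {f f' : ℝ → ℝ} {x f'' : ℝ}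
    (hS : IsOpen S) (hf : ConvexOn ℝ S f) (hf' : ∀ y ∈ S, HasDerivAt f (f' y) y) (hx : x ∈ S)
    (hf'' : HasDerivAt f' f'' x) : 0 ≤ f'' := by
  have hmono : MonotoneOn f' S :=
    (hf.monotoneOn_deriv fun y hy => (hf' y hy).differentiableAt).congr fun y hy => (hf' y hy).deriv
  refine hf''.hasDerivWithinAt.nonneg_of_monotoneOn ?_ hmono
  exact accPt_iff_frequently_nhdsNE.mpr (eventually_nhdsWithin_of_eventually_nhds
    (hS.mem_nhds hx)).frequently

section Perspective

variable {u L Q : ℝ → ℝ} (hu : ∀ x > 0, HasDerivAt u (L x) x) (hL : ∀ x > 0, HasDerivAt L (Q x) x)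
include hu

theorem hasDerivAt_perspective {x : ℝ} (hx : 0 < x) :
    HasDerivAt (fun y => y * u y⁻¹) (u x⁻¹ - L x⁻¹ / x) x := by
  have hu' : HasDerivAt (fun y => u y⁻¹) (L x⁻¹ * -(x ^ 2)⁻¹) x :=
    (hu x⁻¹ (inv_pos.mpr hx)).comp x (hasDerivAt_inv hx.ne')
  refine ((hasDerivAt_id' x).fun_mul hu').congr_deriv ?_
  field_simp
  ring

include hL

theorem hasDerivAt_perspective_deriv {x : ℝ} (hx : 0 < x) :
    HasDerivAt (fun y => u y⁻¹ - L y⁻¹ / y) (Q x⁻¹ / x ^ 3) x := by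
  have hu' : HasDerivAt (fun y => u y⁻¹) (L x⁻¹ * -(x ^ 2)⁻¹) x :=
    (hu x⁻¹ (inv_pos.mpr hx)).comp x (hasDerivAt_inv hx.ne')
  have hL' : HasDerivAt (fun y => L y⁻¹) (Q x⁻¹ * -(x ^ 2)⁻¹) x :=
    (hL x⁻¹ (inv_pos.mpr hx)).comp x (hasDerivAt_inv hx.ne')
  refine (hu'.fun_sub (hL'.fun_div (hasDerivAt_id' x) hx.ne')).congr_deriv ?_
  field_simp
  ring

theorem nonneg_of_convexOn_perspective_comp {S : Set ℝ} {k k' : ℝ → ℝ} {r k'' : ℝ}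
    (hS : IsOpen S) (hr : r ∈ S) (hk_pos : ∀ y ∈ S, 0 < k y)
    (hk : ∀ y ∈ S, HasDerivAt k (k' y) y) (hk' : HasDerivAt k' k'' r) (hkr : k r = 1)
    (hL1 : L 1 = 0) (hconv : ConvexOn ℝ S fun y => k y * u (k y)⁻¹) :
    0 ≤ Q 1 * k' r ^ 2 + u 1 * k'' := by
  have hf' : ∀ y ∈ S, HasDerivAt (fun y => k y * u (k y)⁻¹)
      ((u (k y)⁻¹ - L (k y)⁻¹ / k y) * k' y) y := fun y hy =>
    (hasDerivAt_perspective hu (hk_pos y hy)).comp y (hk y hy)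
  have hf'' := ((hasDerivAt_perspective_deriv hu hL (hk_pos r hr)).comp r (hk r hr)).mul hk'
  have h := hconv.nonneg_of_hasDerivAt_of_hasDerivAt hS hf' hr hf''
  simpa [hkr, hL1, sq, mul_assoc] using h

end Perspective

theorem nonneg_mul_add_of_memDC {m : ℝ} {u L Q : ℝ → ℝ} (hu : ∀ x > 0, HasDerivAt u (L x) x)
    (hL : ∀ x > 0, HasDerivAt L (Q x) x) (hL1 : L 1 = 0) (h : memDC m u) :
    0 ≤ m * u 1 + Q 1 := by
  obtain ⟨-, -, -, hψ⟩ := h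
  split_ifs at hψ with hm1
  · have hψ' : ConvexOn ℝ univ fun r => Real.exp r * u (Real.exp r)⁻¹ :=
      hψ.congr fun r _ => by simp [psiInf, Real.exp_neg]
    have := nonneg_of_convexOn_perspective_comp hu hL isOpen_univ (mem_univ 0)
      (fun r _ => Real.exp_pos r) (fun r _ => Real.hasDerivAt_exp r) (Real.hasDerivAt_exp 0)
      Real.exp_zero hL1 hψ'
    simpa [hm1, add_comm] using this
  · set N := 1 / (1 - m)
    have hNm : N - 1 = m * N := by
      simp only [N]
      field_simp [sub_ne_zero.mpr (Ne.symm hm1)]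
      ring
    have hψ' : ConvexOn ℝ (Ioi 0) fun r => r ^ N * u (r ^ N)⁻¹ :=
      hψ.congr fun r hr => by simp [psiN, Real.rpow_neg (le_of_lt hr)]
    have := nonneg_of_convexOn_perspective_comp hu hL isOpen_Ioi (mem_Ioi.mpr one_pos)
      (fun r hr => Real.rpow_pos_of_pos hr N)
      (fun r hr => Real.hasDerivAt_rpow_const (Or.inl (ne_of_gt hr)))
      ((Real.hasDerivAt_rpow_const (Or.inl one_ne_zero)).const_mul N)
      (Real.one_rpow N) hL1 hψ'
    simp only [Real.one_rpow, mul_one, hNm] at this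
    refine nonneg_of_mul_nonneg_right (a := N ^ 2) ?_ (by positivity)
    linear_combination this

section Dini

variable {φ : ℝ → ℝ}

theorem frequently_lt_slope_of_lt_philimsup (hmono : MonotoneOn φ (Ioi 0)) {x r : ℝ}
    (hx : 0 < x) (hr : r < philimsup φ x) : ∃ᶠ z in 𝓝[>] x, r < slope φ x z := by
  have hnonneg : ∀ᶠ t in 𝓝[>] (0 : ℝ), 0 ≤ (φ (x + t) - φ x) / t := by
    filter_upwards [self_mem_nhdsWithin] with t (ht : 0 < t)
    have := hmono (mem_Ioi.mpr hx) (mem_Ioi.mpr (by linarith)) (by linarith : x ≤ x + t)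
    exact div_nonneg (by linarith) ht.le
  have hfreq : ∃ᶠ t in 𝓝[>] (0 : ℝ), r < (φ (x + t) - φ x) / t :=
    frequently_lt_of_lt_limsup (IsCoboundedUnder.of_frequently_ge hnonneg.frequently) hr
  have hmap : map (x + ·) (𝓝[>] (0 : ℝ)) = 𝓝[>] x := by simp
  rw [← hmap, frequently_map]
  refine hfreq.mono fun t ht => ?_
  rwa [slope_def_field, add_sub_cancel_left]

theorem mul_div_lt_philimsup_of_lt_isGLB (hpos : ∀ s > (0 : ℝ), 0 < φ s) {δ e : ℝ}
    (hδ : IsGLB (thetaSet φ) δ) (he : e < δ) : ∀ x > 0, e * (φ x / x) < philimsup φ x := by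
  intro x hx
  have hx' : 0 < φ x / x := div_pos (hpos x hx) hx
  calc e * (φ x / x) < δ * (φ x / x) := mul_lt_mul_of_pos_right he hx'
    _ ≤ x / φ x * philimsup φ x * (φ x / x) :=
        mul_le_mul_of_nonneg_right (hδ.1 ⟨x, hx, rfl⟩) hx'.le
    _ = philimsup φ x := by field_simp [(hpos x hx).ne']

theorem monotoneOn_div_rpow_of_lt_philimsup (hmono : MonotoneOn φ (Ioi 0))
    (hcont : ContinuousOn φ (Ioi 0)) {e : ℝ}
    (hθ : ∀ x > 0, e * (φ x / x) < philimsup φ x) :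
    MonotoneOn (fun x => φ x / x ^ e) (Ioi 0) := by
  intro a (ha : 0 < a) b (hb : 0 < b) hab
  have hpos : ∀ x ∈ Icc a b, 0 < x := fun x hx => ha.trans_le hx.1
  set C := φ a / a ^ e
  -- the barrier `C x ^ e` meets `φ` at `a`; wherever they meet, `D⁺φ` beats its slope
  have hcmp := image_le_of_liminf_slope_right_lt_deriv_boundary' (a := a) (b := b)
    (f := fun x => -φ x) (f' := fun x => -philimsup φ x)
    (B := fun x => -(C * x ^ e)) (B' := fun x => -(C * (e * x ^ (e - 1))))
    (hcont.mono fun x hx => hpos x hx).neg ?_ ?_ ?_ ?_ ?_ (right_mem_Icc.mpr hab)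
  · have : C * b ^ e ≤ φ b := neg_le_neg_iff.mp hcmp
    rwa [le_div_iff₀ (Real.rpow_pos_of_pos hb e)]
  · intro x hx r hr
    refine (frequently_lt_slope_of_lt_philimsup hmono (hpos x (Ico_subset_Icc_self hx))
      (neg_lt.mp hr)).mono fun z hz => ?_
    rw [slope_def_field] at hz ⊢
    have : (-φ z - -φ x) / (z - x) = -((φ z - φ x) / (z - x)) := by ring
    linarith
  · simp [C, div_mul_cancel₀ _ (Real.rpow_pos_of_pos ha e).ne']
  · exact (continuousOn_const.mul ((continuousOn_id.rpow_const fun x hx =>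
      Or.inl (hpos x hx).ne'))).neg
  · intro x hx
    exact ((Real.hasDerivAt_rpow_const (Or.inl (hpos x (Ico_subset_Icc_self hx)).ne')).const_mul
      C).neg.hasDerivWithinAt
  · intro x hx hφx
    have hx0 := hpos x (Ico_subset_Icc_self hx)
    have hφx' : φ x = C * x ^ e := neg_inj.mp hφx
    have := hθ x hx0
    rw [hφx'] at this
    rw [neg_lt_neg_iff, Real.rpow_sub_one hx0.ne']
    calc C * (e * (x ^ e / x)) = e * (C * x ^ e / x) := by ring
      _ < _ := this

end Dini

section Integrals

theorem lnphi_one (φ : ℝ → ℝ) : lnphi φ 1 = 0 := intervalIntegral.integral_same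

variable {φ : ℝ → ℝ} (hpos : ∀ s > (0 : ℝ), 0 < φ s) (hcont : ContinuousOn φ (Ioi 0))
include hpos hcont

theorem hasDerivAt_lnphi {x : ℝ} (hx : 0 < x) : HasDerivAt (lnphi φ) (1 / φ x) x := by
  have hc : ContinuousOn (fun s => 1 / φ s) (Ioi 0) :=
    continuousOn_const.div hcont fun s hs => (hpos s hs).ne'
  have hint : IntervalIntegrable (fun s => 1 / φ s) volume 1 x :=
    (hc.mono fun s hs => (lt_inf_iff.mpr ⟨one_pos, hx⟩).trans_le hs.1).intervalIntegrable
  exact intervalIntegral.integral_hasDerivAt_right hint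
    (hc.stronglyMeasurableAtFilter isOpen_Ioi x hx) (hc.continuousAt (isOpen_Ioi.mem_nhds hx))

theorem continuousOn_lnphi : ContinuousOn (lnphi φ) (Ioi 0) := fun _ hx =>
  (hasDerivAt_lnphi hpos hcont hx).continuousAt.continuousWithinAt

omit hcont in
theorem lnphi_nonpos {t : ℝ} (ht : 0 < t) (ht1 : t ≤ 1) : lnphi φ t ≤ 0 := by
  rw [lnphi, intervalIntegral.integral_symm, neg_nonpos]
  exact intervalIntegral.integral_nonneg ht1 fun s hs =>
    (one_div_pos.mpr (hpos s (ht.trans_le hs.1))).le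

variable (hint : IntervalIntegrable (fun s => s / φ s) volume 0 1)
include hint

theorem integral_neg_lnphi_le {a : ℝ} (ha : 0 < a) (ha1 : a ≤ 1) :
    ∫ t in a..1, -lnphi φ t ≤ ∫ s in (0 : ℝ)..1, s / φ s := by
  set F : ℝ → ℝ := fun t => ∫ s in (0 : ℝ)..t, s / φ s
  have hc : ContinuousOn (fun s => s / φ s) (Ioi 0) :=
    continuousOn_id.div hcont fun s hs => (hpos s hs).ne'
  have hderiv : ∀ x ∈ uIcc a 1, HasDerivAt (fun t => t * lnphi φ t - F t) (lnphi φ x) x := by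
    intro x hx
    rw [uIcc_of_le ha1] at hx
    have hx0 : 0 < x := ha.trans_le hx.1
    have h0x : uIcc 0 x ⊆ uIcc 0 1 := by
      rw [uIcc_of_le hx0.le, uIcc_of_le zero_le_one]
      exact Icc_subset_Icc le_rfl hx.2
    have hF : HasDerivAt F (x / φ x) x :=
      intervalIntegral.integral_hasDerivAt_right (hint.mono_set h0x)
        (hc.stronglyMeasurableAtFilter isOpen_Ioi x hx0) (hc.continuousAt (isOpen_Ioi.mem_nhds hx0))
    refine (((hasDerivAt_id' x).mul (hasDerivAt_lnphi hpos hcont hx0)).sub hF).congr_deriv ?_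
    field_simp [(hpos x hx0).ne']
    ring
  have hL : IntervalIntegrable (lnphi φ) volume a 1 :=
    ((continuousOn_lnphi hpos hcont).mono fun y hy =>
      ha.trans_le (by rw [uIcc_of_le ha1] at hy; exact hy.1)).intervalIntegrable
  have hFa : 0 ≤ F a := intervalIntegral.integral_nonneg ha.le fun s hs => by
    rcases hs.1.eq_or_lt with rfl | hs0
    · simp
    · exact div_nonneg hs0.le (hpos s hs0).le
  rw [intervalIntegral.integral_neg, intervalIntegral.integral_eq_sub_of_hasDerivAt hderiv hL]
  nlinarith [lnphi_one φ, lnphi_nonpos hpos ha ha1]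

theorem integrableOn_lnphi : IntegrableOn (lnphi φ) (Ioc 0 1) := by
  set a : ℕ → ℝ := fun n => 1 / ((n : ℝ) + 1)
  have ha : ∀ n, 0 < a n := fun n => by positivity
  have ha1 : ∀ n, a n ≤ 1 := fun n => by
    simp only [a]; rw [div_le_one (by positivity)]; linarith [n.cast_nonneg (α := ℝ)]
  refine integrableOn_Ioc_of_intervalIntegral_norm_bounded_left
    (I := ∫ s in (0 : ℝ)..1, s / φ s) (fun n => ?_) tendsto_one_div_add_atTop_nhds_zero_nat
    (Eventually.of_forall fun n => ?_)
  · exact ((continuousOn_lnphi hpos hcont).mono fun y hy => (ha n).trans_le hy.1).integrableOn_Icc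
      |>.mono_set Ioc_subset_Icc_self
  · rw [← intervalIntegral.integral_of_le (ha1 n)]
    refine le_trans (le_of_eq (intervalIntegral.integral_congr fun t ht => ?_))
      (integral_neg_lnphi_le hpos hcont hint (ha n) (ha1 n))
    rw [uIcc_of_le (ha1 n)] at ht
    exact abs_of_nonpos (lnphi_nonpos hpos ((ha n).trans_le ht.1) ht.2)

theorem hasDerivAt_uphi {x : ℝ} (hx : 0 < x) : HasDerivAt (uphi φ) (lnphi φ x) x := by
  have hcL := continuousOn_lnphi hpos hcont
  have h01 : IntervalIntegrable (lnphi φ) volume 0 1 :=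
    (intervalIntegrable_iff_integrableOn_Ioc_of_le zero_le_one).mpr
      (integrableOn_lnphi hpos hcont hint)
  have h0x : IntervalIntegrable (lnphi φ) volume 0 x := by
    rcases le_total x 1 with h | h
    · exact h01.mono_set (by
        rw [uIcc_of_le hx.le, uIcc_of_le zero_le_one]; exact Icc_subset_Icc le_rfl h)
    · exact h01.trans ((hcL.mono fun y hy => one_pos.trans_le
        (by rw [uIcc_of_le h] at hy; exact hy.1)).intervalIntegrable)
  exact intervalIntegral.integral_hasDerivAt_right h0x
    (hcL.stronglyMeasurableAtFilter isOpen_Ioi x hx) (hcL.continuousAt (isOpen_Ioi.mem_nhds hx))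

theorem inv_le_neg_uphi_one {c e : ℝ} (he2 : e < 2) (he1 : e ≠ 1)
    (hle : ∀ s ∈ Ioc (0 : ℝ) 1, φ s ≤ c * s ^ e) : ((2 - e) * c)⁻¹ ≤ -uphi φ 1 := by
  have h1e : 1 - e ≠ 0 := sub_ne_zero.mpr (Ne.symm he1)
  have h2e : 2 - e ≠ 0 := by linarith
  set g : ℝ → ℝ := fun t => (1 - t ^ (1 - e)) / ((1 - e) * c)
  have hg_le : ∀ t ∈ Ioo (0 : ℝ) 1, g t ≤ -lnphi φ t := by
    rintro t ⟨ht0, ht1⟩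
    have hts : ∀ s ∈ Icc t 1, 0 < s := fun s hs => ht0.trans_le hs.1
    calc g t = ∫ s in t..1, s ^ (-e) / c := by
          rw [intervalIntegral.integral_div, integral_rpow (Or.inr ⟨by contrapose! he1; linarith,
            by rw [uIcc_of_le ht1.le]; exact fun h => (lt_irrefl 0 (hts 0 h))⟩)]
          simp only [g, Real.one_rpow, show -e + 1 = 1 - e by ring, div_div]
      _ ≤ ∫ s in t..1, 1 / φ s := by
          refine intervalIntegral.integral_mono_on ht1.le ?_ ?_ fun s hs => ?_
          · refine ContinuousOn.intervalIntegrable ?_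
            rw [uIcc_of_le ht1.le]
            exact (continuousOn_id.rpow_const fun s hs => Or.inl (hts s hs).ne').div_const c
          · refine ContinuousOn.intervalIntegrable ?_
            rw [uIcc_of_le ht1.le]
            exact continuousOn_const.div (hcont.mono hts) fun s hs => (hpos s (hts s hs)).ne'
          · rw [Real.rpow_neg (hts s hs).le, div_eq_mul_inv, ← mul_inv, ← one_div, mul_comm]
            exact one_div_le_one_div_of_le (hpos s (hts s hs)) (hle s ⟨hts s hs, hs.2⟩)
      _ = -lnphi φ t := by rw [lnphi, intervalIntegral.integral_symm]
  have hpow_int : IntervalIntegrable (fun t : ℝ => t ^ (1 - e)) volume 0 1 :=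
    intervalIntegral.intervalIntegrable_rpow' (by linarith)
  have hg_int : IntervalIntegrable g volume 0 1 :=
    (intervalIntegrable_const.sub hpow_int).div_const _
  have hL_int : IntervalIntegrable (fun t => -lnphi φ t) volume 0 1 :=
    ((intervalIntegrable_iff_integrableOn_Ioc_of_le zero_le_one).mpr
      (integrableOn_lnphi hpos hcont hint)).neg
  calc ((2 - e) * c)⁻¹ = ∫ t in (0 : ℝ)..1, g t := by
        simp only [g]
        rw [intervalIntegral.integral_div, intervalIntegral.integral_sub intervalIntegrable_const
          hpow_int, intervalIntegral.integral_const, integral_rpow (Or.inl (by linarith))]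
        rw [show 1 - e + 1 = 2 - e by ring, Real.one_rpow, Real.zero_rpow h2e]
        field_simp
        ring
    _ ≤ ∫ t in (0 : ℝ)..1, -lnphi φ t :=
        intervalIntegral.integral_mono_on_of_le_Ioo zero_le_one hg_int hL_int hg_le
    _ = -uphi φ 1 := by rw [uphi, intervalIntegral.integral_neg]

end Integrals

/-- If `u_φ` is well-defined, `δ_φ < 2`, and `u_φ ∈ DC_N` for some
`N ∈ (-∞,0) ∪ (1,∞]` (i.e. with parameter `m = (N-1)/N > 0`), then
`δ_φ ≤ (N+1)/N = 2 - m`. -/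
theorem stmt10 (φ : ℝ → ℝ)
    (hpos : ∀ s > (0:ℝ), 0 < φ s)
    (hmono : MonotoneOn φ (Ioi 0))
    (hcont : ContinuousOn φ (Ioi 0))
    (hint : IntervalIntegrable (fun s => s / φ s) MeasureTheory.volume 0 1)
    (δ : ℝ) (hδ : IsGLB (thetaSet φ) δ) (hδ2 : δ < 2)
    (m : ℝ) (hm : 0 < m) (h : memDC m (uphi φ)) :
    δ ≤ 2 - m := by
  have hφ1 : 0 < φ 1 := hpos 1 one_pos
  have hconv : 0 ≤ m * uphi φ 1 + 1 / φ 1 :=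
    nonneg_mul_add_of_memDC (fun x hx => hasDerivAt_uphi hpos hcont hint hx)
      (fun x hx => hasDerivAt_lnphi hpos hcont hx) (lnphi_one φ) h
  by_contra! hlt
  obtain ⟨e, ⟨hme, heδ⟩, he1 : e ≠ 1⟩ :=
    ((Ioo_infinite hlt).sdiff (finite_singleton 1)).nonempty
  have hθ := mul_div_lt_philimsup_of_lt_isGLB hpos hδ heδ
  have hφ : ∀ s ∈ Ioc (0 : ℝ) 1, φ s ≤ φ 1 * s ^ e := fun s hs => by
    have : φ s / s ^ e ≤ φ 1 / 1 ^ e :=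
      monotoneOn_div_rpow_of_lt_philimsup hmono hcont hθ hs.1 (mem_Ioi.mpr one_pos) hs.2
    rwa [Real.one_rpow, div_one, div_le_iff₀ (Real.rpow_pos_of_pos hs.1 e)] at this
  have hlow := inv_le_neg_uphi_one hpos hcont hint (heδ.trans hδ2) he1 hφ
  have h2e : 0 < 2 - e := by linarith
  have : m * ((2 - e) * φ 1)⁻¹ ≤ (φ 1)⁻¹ :=
    calc m * ((2 - e) * φ 1)⁻¹ ≤ m * -uphi φ 1 := mul_le_mul_of_nonneg_left hlow hm.le
      _ ≤ (φ 1)⁻¹ := by rw [← one_div]; linarith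
  rw [mul_inv, ← mul_assoc, mul_le_iff_le_one_left (inv_pos.mpr hφ1), ← div_eq_mul_inv,
    div_le_one h2e] at this
  linarith
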